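/- Let φ: U → ℝ³ be a smooth conformal harmonic map to the unit sphere with φ_z never zero, u: U → ℝ smooth with u_{z z̄} = -|φ_z|² u, and X = u φ + |φ_z|^{-2}(u_z φ_{z̄} + u_{z̄} φ_z). Then X is conformal, i.e. (X_z, X_z) = 0, and X is harmonic, i.e. X_{z z̄} = 0. -/

import Mathlib

open Complex

/-- Wirtinger derivative `∂_z f = (1/2)(∂_x f - i ∂_y f)`. -/
noncomputable def wz {E : Type*} [NormedAddCommGroup E] [NormedSpace ℂ E]
    (f : ℂ → E) (z : ℂ) : E :=
  (2⁻¹ : ℂ) • (fderiv ℝ f z 1 - Complex.I • fderiv ℝ f z Complex.I)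

/-- Wirtinger derivative `∂_z̄ f = (1/2)(∂_x f + i ∂_y f)`. -/
noncomputable def wzb {E : Type*} [NormedAddCommGroup E] [NormedSpace ℂ E]
    (f : ℂ → E) (z : ℂ) : E :=
  (2⁻¹ : ℂ) • (fderiv ℝ f z 1 + Complex.I • fderiv ℝ f z Complex.I)

/-- The ℂ-bilinear product `(v,w) = Σ vᵢ wᵢ` on ℂ³. -/
noncomputable def bil (v w : Fin 3 → ℂ) : ℂ := ∑ i, v i * w i

/-- The Hermitian product `⟨v,w⟩ = Σ vᵢ w̄ᵢ` on ℂ³. -/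
noncomputable def herm (v w : Fin 3 → ℂ) : ℂ := ∑ i, v i * (starRingEnd ℂ) (w i)

/-- `|φ_z|² = ⟨φ_z, φ_z⟩` as a complex number (it is real-valued). -/
noncomputable def nsq (φ : ℂ → Fin 3 → ℂ) (z : ℂ) : ℂ := herm (wz φ z) (wz φ z)

section Toolkit

variable {E : Type*} [NormedAddCommGroup E] [NormedSpace ℂ E] {z : ℂ} {U : Set ℂ}

lemma wz_congr {f g : ℂ → E} (h : f =ᶠ[nhds z] g) : wz f z = wz g z := by
  simp only [wz, h.fderiv_eq]

lemma wzb_congr {f g : ℂ → E} (h : f =ᶠ[nhds z] g) : wzb f z = wzb g z := by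
  simp only [wzb, h.fderiv_eq]

lemma wz_const (c : E) : wz (fun _ => c) z = 0 := by simp [wz]

lemma wzb_const (c : E) : wzb (fun _ => c) z = 0 := by simp [wzb]

lemma wz_of_hasFDerivAt {f : ℂ → E} {D : ℂ →L[ℝ] E} (h : HasFDerivAt f D z) :
    wz f z = (2⁻¹ : ℂ) • (D 1 - Complex.I • D Complex.I) := by rw [wz, h.fderiv]

lemma wzb_of_hasFDerivAt {f : ℂ → E} {D : ℂ →L[ℝ] E} (h : HasFDerivAt f D z) :
    wzb f z = (2⁻¹ : ℂ) • (D 1 + Complex.I • D Complex.I) := by rw [wzb, h.fderiv]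

lemma wz_smul {f : ℂ → ℂ} {g : ℂ → E} (hf : DifferentiableAt ℝ f z)
    (hg : DifferentiableAt ℝ g z) :
    wz (fun w => f w • g w) z = wz f z • g z + f z • wz g z := by
  rw [wz_of_hasFDerivAt (f := fun w => f w • g w) (hf.hasFDerivAt.smul hg.hasFDerivAt)]
  simp only [ContinuousLinearMap.add_apply, ContinuousLinearMap.smul_apply,
    ContinuousLinearMap.smulRight_apply, wz, smul_smul, smul_eq_mul]
  module

lemma wzb_smul {f : ℂ → ℂ} {g : ℂ → E} (hf : DifferentiableAt ℝ f z)
    (hg : DifferentiableAt ℝ g z) :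
    wzb (fun w => f w • g w) z = wzb f z • g z + f z • wzb g z := by
  rw [wzb_of_hasFDerivAt (f := fun w => f w • g w) (hf.hasFDerivAt.smul hg.hasFDerivAt)]
  simp only [ContinuousLinearMap.add_apply, ContinuousLinearMap.smul_apply,
    ContinuousLinearMap.smulRight_apply, wzb, smul_smul, smul_eq_mul]
  module

lemma wz_add {f g : ℂ → E} (hf : DifferentiableAt ℝ f z) (hg : DifferentiableAt ℝ g z) :
    wz (fun w => f w + g w) z = wz f z + wz g z := by
  rw [wz_of_hasFDerivAt (f := fun w => f w + g w) (hf.hasFDerivAt.add hg.hasFDerivAt)]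
  simp only [ContinuousLinearMap.add_apply, wz]
  module

lemma wzb_add {f g : ℂ → E} (hf : DifferentiableAt ℝ f z) (hg : DifferentiableAt ℝ g z) :
    wzb (fun w => f w + g w) z = wzb f z + wzb g z := by
  rw [wzb_of_hasFDerivAt (f := fun w => f w + g w) (hf.hasFDerivAt.add hg.hasFDerivAt)]
  simp only [ContinuousLinearMap.add_apply, wzb]
  module

lemma wzb_sub {f g : ℂ → E} (hf : DifferentiableAt ℝ f z) (hg : DifferentiableAt ℝ g z) :
    wzb (fun w => f w - g w) z = wzb f z - wzb g z := by
  rw [wzb_of_hasFDerivAt (f := fun w => f w - g w) (hf.hasFDerivAt.sub hg.hasFDerivAt)]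
  simp only [ContinuousLinearMap.sub_apply, wzb]
  module

lemma wz_neg {f : ℂ → E} (hf : DifferentiableAt ℝ f z) :
    wz (fun w => -(f w)) z = -(wz f z) := by
  rw [wz_of_hasFDerivAt (f := fun w => -(f w)) hf.hasFDerivAt.neg]
  simp only [ContinuousLinearMap.neg_apply, wz]
  module

lemma wz_mul {f g : ℂ → ℂ} (hf : DifferentiableAt ℝ f z) (hg : DifferentiableAt ℝ g z) :
    wz (fun w => f w * g w) z = wz f z * g z + f z * wz g z := by
  simpa [smul_eq_mul] using wz_smul (g := g) hf hg

lemma wzb_mul {f g : ℂ → ℂ} (hf : DifferentiableAt ℝ f z) (hg : DifferentiableAt ℝ g z) :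
    wzb (fun w => f w * g w) z = wzb f z * g z + f z * wzb g z := by
  simpa [smul_eq_mul] using wzb_smul (g := g) hf hg

lemma diffAt_apply {f : ℂ → Fin 3 → ℂ} (hf : DifferentiableAt ℝ f z) (i : Fin 3) :
    DifferentiableAt ℝ (fun w => f w i) z :=
  (((ContinuousLinearMap.proj (R := ℂ) (φ := fun _ : Fin 3 => ℂ) i).restrictScalars
      ℝ).differentiable.differentiableAt).comp z hf

lemma wz_apply {f : ℂ → Fin 3 → ℂ} (hf : DifferentiableAt ℝ f z) (i : Fin 3) :
    wz (fun w => f w i) z = wz f z i := by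
  have h : HasFDerivAt (fun w => f w i)
      (((ContinuousLinearMap.proj (R := ℂ) (φ := fun _ : Fin 3 => ℂ) i).restrictScalars ℝ).comp
        (fderiv ℝ f z)) z :=
    (((ContinuousLinearMap.proj (R := ℂ) (φ := fun _ : Fin 3 => ℂ) i).restrictScalars
      ℝ).hasFDerivAt).comp z hf.hasFDerivAt
  rw [wz_of_hasFDerivAt h]
  simp [wz]

lemma wzb_apply {f : ℂ → Fin 3 → ℂ} (hf : DifferentiableAt ℝ f z) (i : Fin 3) :
    wzb (fun w => f w i) z = wzb f z i := by
  have h : HasFDerivAt (fun w => f w i)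
      (((ContinuousLinearMap.proj (R := ℂ) (φ := fun _ : Fin 3 => ℂ) i).restrictScalars ℝ).comp
        (fderiv ℝ f z)) z :=
    (((ContinuousLinearMap.proj (R := ℂ) (φ := fun _ : Fin 3 => ℂ) i).restrictScalars
      ℝ).hasFDerivAt).comp z hf.hasFDerivAt
  rw [wzb_of_hasFDerivAt h]
  simp [wzb]

lemma wz_inv {f : ℂ → ℂ} (hf : DifferentiableAt ℝ f z) (h0 : f z ≠ 0) :
    wz (fun w => (f w)⁻¹) z = -((f z) ^ 2)⁻¹ * wz f z := by
  have h : HasFDerivAt (fun w => (f w)⁻¹)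
      ((ContinuousLinearMap.restrictScalars ℝ
        (ContinuousLinearMap.smulRight (1 : ℂ →L[ℂ] ℂ) (-(f z ^ 2)⁻¹))).comp (fderiv ℝ f z)) z :=
    ((hasDerivAt_inv h0).hasFDerivAt.restrictScalars ℝ).comp z hf.hasFDerivAt
  rw [wz_of_hasFDerivAt h]
  simp only [wz, ContinuousLinearMap.coe_comp', Function.comp_apply,
    ContinuousLinearMap.coe_restrictScalars', ContinuousLinearMap.smulRight_apply,
    ContinuousLinearMap.one_apply, smul_eq_mul]
  ring

lemma wzb_inv {f : ℂ → ℂ} (hf : DifferentiableAt ℝ f z) (h0 : f z ≠ 0) :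
    wzb (fun w => (f w)⁻¹) z = -((f z) ^ 2)⁻¹ * wzb f z := by
  have h : HasFDerivAt (fun w => (f w)⁻¹)
      ((ContinuousLinearMap.restrictScalars ℝ
        (ContinuousLinearMap.smulRight (1 : ℂ →L[ℂ] ℂ) (-(f z ^ 2)⁻¹))).comp (fderiv ℝ f z)) z :=
    ((hasDerivAt_inv h0).hasFDerivAt.restrictScalars ℝ).comp z hf.hasFDerivAt
  rw [wzb_of_hasFDerivAt h]
  simp only [wzb, ContinuousLinearMap.coe_comp', Function.comp_apply,
    ContinuousLinearMap.coe_restrictScalars', ContinuousLinearMap.smulRight_apply,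
    ContinuousLinearMap.one_apply, smul_eq_mul]
  ring

lemma diffAt_inv {f : ℂ → ℂ} (hf : DifferentiableAt ℝ f z) (h0 : f z ≠ 0) :
    DifferentiableAt ℝ (fun w => (f w)⁻¹) z := by
  have h : HasFDerivAt (fun w => (f w)⁻¹)
      ((ContinuousLinearMap.restrictScalars ℝ
        (ContinuousLinearMap.smulRight (1 : ℂ →L[ℂ] ℂ) (-(f z ^ 2)⁻¹))).comp (fderiv ℝ f z)) z :=
    ((hasDerivAt_inv h0).hasFDerivAt.restrictScalars ℝ).comp z hf.hasFDerivAt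
  exact h.differentiableAt

lemma diffAt_of_cd {f : ℂ → E} (hU : IsOpen U) (hz : z ∈ U)
    (hf : ContDiffOn ℝ (⊤ : ℕ∞) f U) : DifferentiableAt ℝ f z :=
  (hf.contDiffAt (hU.mem_nhds hz)).differentiableAt (by simp)

lemma contDiffOn_fderiv {f : ℂ → E} (hU : IsOpen U) (hf : ContDiffOn ℝ (⊤ : ℕ∞) f U) :
    ContDiffOn ℝ (⊤ : ℕ∞) (fderiv ℝ f) U :=
  hf.fderiv_of_isOpen hU (by simp)

lemma contDiffOn_wz {f : ℂ → E} (hU : IsOpen U) (hf : ContDiffOn ℝ (⊤ : ℕ∞) f U) :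
    ContDiffOn ℝ (⊤ : ℕ∞) (wz f) U := by
  have hd := contDiffOn_fderiv hU hf
  have h1 : ContDiffOn ℝ (⊤ : ℕ∞) (fun w => fderiv ℝ f w 1) U :=
    (ContinuousLinearMap.apply ℝ E (1 : ℂ)).contDiff.comp_contDiffOn hd
  have hI : ContDiffOn ℝ (⊤ : ℕ∞) (fun w => fderiv ℝ f w Complex.I) U :=
    (ContinuousLinearMap.apply ℝ E (Complex.I : ℂ)).contDiff.comp_contDiffOn hd
  exact ((h1.sub (hI.const_smul Complex.I)).const_smul ((2⁻¹ : ℂ)))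

lemma contDiffOn_wzb {f : ℂ → E} (hU : IsOpen U) (hf : ContDiffOn ℝ (⊤ : ℕ∞) f U) :
    ContDiffOn ℝ (⊤ : ℕ∞) (wzb f) U := by
  have hd := contDiffOn_fderiv hU hf
  have h1 : ContDiffOn ℝ (⊤ : ℕ∞) (fun w => fderiv ℝ f w 1) U :=
    (ContinuousLinearMap.apply ℝ E (1 : ℂ)).contDiff.comp_contDiffOn hd
  have hI : ContDiffOn ℝ (⊤ : ℕ∞) (fun w => fderiv ℝ f w Complex.I) U :=
    (ContinuousLinearMap.apply ℝ E (Complex.I : ℂ)).contDiff.comp_contDiffOn hd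
  exact ((h1.add (hI.const_smul Complex.I)).const_smul ((2⁻¹ : ℂ)))

lemma fderiv_wz_apply {f : ℂ → E} (hU : IsOpen U) (hz : z ∈ U)
    (hf : ContDiffOn ℝ (⊤ : ℕ∞) f U) (v : ℂ) :
    fderiv ℝ (wz f) z v =
      (2⁻¹ : ℂ) • (fderiv ℝ (fderiv ℝ f) z v 1 -
        Complex.I • fderiv ℝ (fderiv ℝ f) z v Complex.I) := by
  have hAd : DifferentiableAt ℝ (fderiv ℝ f) z :=
    diffAt_of_cd hU hz (contDiffOn_fderiv hU hf)
  have h1 : HasFDerivAt (fun w => fderiv ℝ f w 1)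
      ((ContinuousLinearMap.apply ℝ E (1 : ℂ)).comp (fderiv ℝ (fderiv ℝ f) z)) z :=
    (ContinuousLinearMap.apply ℝ E (1 : ℂ)).hasFDerivAt.comp z hAd.hasFDerivAt
  have hI : HasFDerivAt (fun w => fderiv ℝ f w Complex.I)
      ((ContinuousLinearMap.apply ℝ E (Complex.I : ℂ)).comp (fderiv ℝ (fderiv ℝ f) z)) z :=
    (ContinuousLinearMap.apply ℝ E (Complex.I : ℂ)).hasFDerivAt.comp z hAd.hasFDerivAt
  have h : HasFDerivAt (wz f)
      (((2⁻¹ : ℂ) • ((ContinuousLinearMap.apply ℝ E (1 : ℂ)).comp (fderiv ℝ (fderiv ℝ f) z) -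
        Complex.I • (ContinuousLinearMap.apply ℝ E (Complex.I : ℂ)).comp
          (fderiv ℝ (fderiv ℝ f) z)))) z :=
    ((h1.sub (hI.const_smul Complex.I)).const_smul ((2⁻¹ : ℂ)))
  rw [h.fderiv]
  simp

lemma fderiv_wzb_apply {f : ℂ → E} (hU : IsOpen U) (hz : z ∈ U)
    (hf : ContDiffOn ℝ (⊤ : ℕ∞) f U) (v : ℂ) :
    fderiv ℝ (wzb f) z v =
      (2⁻¹ : ℂ) • (fderiv ℝ (fderiv ℝ f) z v 1 +
        Complex.I • fderiv ℝ (fderiv ℝ f) z v Complex.I) := by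
  have hAd : DifferentiableAt ℝ (fderiv ℝ f) z :=
    diffAt_of_cd hU hz (contDiffOn_fderiv hU hf)
  have h1 : HasFDerivAt (fun w => fderiv ℝ f w 1)
      ((ContinuousLinearMap.apply ℝ E (1 : ℂ)).comp (fderiv ℝ (fderiv ℝ f) z)) z :=
    (ContinuousLinearMap.apply ℝ E (1 : ℂ)).hasFDerivAt.comp z hAd.hasFDerivAt
  have hI : HasFDerivAt (fun w => fderiv ℝ f w Complex.I)
      ((ContinuousLinearMap.apply ℝ E (Complex.I : ℂ)).comp (fderiv ℝ (fderiv ℝ f) z)) z :=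
    (ContinuousLinearMap.apply ℝ E (Complex.I : ℂ)).hasFDerivAt.comp z hAd.hasFDerivAt
  have h : HasFDerivAt (wzb f)
      (((2⁻¹ : ℂ) • ((ContinuousLinearMap.apply ℝ E (1 : ℂ)).comp (fderiv ℝ (fderiv ℝ f) z) +
        Complex.I • (ContinuousLinearMap.apply ℝ E (Complex.I : ℂ)).comp
          (fderiv ℝ (fderiv ℝ f) z)))) z :=
    ((h1.add (hI.const_smul Complex.I)).const_smul ((2⁻¹ : ℂ)))
  rw [h.fderiv]
  simp

/-- Mixed Wirtinger derivatives commute for smooth functions. -/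
lemma wz_wzb_comm {f : ℂ → E} (hU : IsOpen U) (hz : z ∈ U)
    (hf : ContDiffOn ℝ (⊤ : ℕ∞) f U) : wz (wzb f) z = wzb (wz f) z := by
  have hsym : fderiv ℝ (fderiv ℝ f) z 1 Complex.I = fderiv ℝ (fderiv ℝ f) z Complex.I 1 :=
    (hf.contDiffAt (hU.mem_nhds hz)).isSymmSndFDerivAt (by rw [minSmoothness_of_isRCLikeNormedField]; exact WithTop.coe_le_coe.mpr (le_top : (2 : ℕ∞) ≤ ⊤)) 1 Complex.I
  rw [wz, wzb, fderiv_wzb_apply hU hz hf, fderiv_wzb_apply hU hz hf,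
    fderiv_wz_apply hU hz hf, fderiv_wz_apply hU hz hf, hsym]
  module

/-- For a function real-valued on an open set, `∂_z̄ f = conj (∂_z f)`. -/
lemma wzb_eq_conj_wz {f : ℂ → ℂ} (hU : IsOpen U) (hz : z ∈ U)
    (hf : DifferentiableAt ℝ f z) (hreal : ∀ w ∈ U, (f w).im = 0) :
    wzb f z = starRingEnd ℂ (wz f z) := by
  have him : ∀ v : ℂ, (fderiv ℝ f z v).im = 0 := by
    intro v
    have h1 : (fun w => (f w).im) =ᶠ[nhds z] fun _ => (0 : ℝ) := by
      filter_upwards [hU.mem_nhds hz] with w hw using hreal w hw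
    have h2 : fderiv ℝ (fun w => (f w).im) z = 0 := by
      rw [h1.fderiv_eq]; exact fderiv_const_apply 0
    have h3 : fderiv ℝ (fun w => (f w).im) z = Complex.imCLM.comp (fderiv ℝ f z) :=
      (Complex.imCLM.hasFDerivAt.comp z hf.hasFDerivAt).fderiv
    have := congrArg (fun (L : ℂ →L[ℝ] ℝ) => L v) (h3.symm.trans h2)
    simpa using this
  simp only [wz, wzb, smul_eq_mul]
  apply Complex.ext <;>
    simp [Complex.mul_re, Complex.mul_im, him 1, him Complex.I]

lemma bil_comm (v w : Fin 3 → ℂ) : bil v w = bil w v := by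
  simp [bil, mul_comm]

lemma bil_smul (c : ℂ) (v w : Fin 3 → ℂ) : bil (c • v) w = c * bil v w := by
  simp [bil, Finset.mul_sum, mul_assoc]

lemma bil_smul_right (c : ℂ) (v w : Fin 3 → ℂ) : bil v (c • w) = c * bil v w := by
  rw [bil_comm, bil_smul, bil_comm]

lemma bil_add (v₁ v₂ w : Fin 3 → ℂ) : bil (v₁ + v₂) w = bil v₁ w + bil v₂ w := by
  simp [bil, add_mul, Finset.sum_add_distrib]

lemma bil_conj (v w : Fin 3 → ℂ) :
    bil (fun i => starRingEnd ℂ (v i)) (fun i => starRingEnd ℂ (w i)) =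
      starRingEnd ℂ (bil v w) := by
  simp [bil]

lemma wz_bil {f g : ℂ → Fin 3 → ℂ} (hf : DifferentiableAt ℝ f z)
    (hg : DifferentiableAt ℝ g z) :
    wz (fun w => bil (f w) (g w)) z = bil (wz f z) (g z) + bil (f z) (wz g z) := by
  have d : ∀ i, DifferentiableAt ℝ (fun w => f w i * g w i) z := fun i =>
    (diffAt_apply hf i).mul (diffAt_apply hg i)
  have h0 : wz (fun w => bil (f w) (g w)) z =
      wz (fun w => f w 0 * g w 0 + f w 1 * g w 1 + f w 2 * g w 2) z := by
    apply wz_congr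
    filter_upwards with w
    simp [bil, Fin.sum_univ_three]
  rw [h0, wz_add (f := fun w => f w 0 * g w 0 + f w 1 * g w 1) ((d 0).add (d 1)) (d 2), wz_add (d 0) (d 1),
    wz_mul (diffAt_apply hf 0) (diffAt_apply hg 0),
    wz_mul (diffAt_apply hf 1) (diffAt_apply hg 1),
    wz_mul (diffAt_apply hf 2) (diffAt_apply hg 2),
    wz_apply hf 0, wz_apply hf 1, wz_apply hf 2,
    wz_apply hg 0, wz_apply hg 1, wz_apply hg 2]
  simp only [bil, Fin.sum_univ_three]
  ring

lemma wzb_bil {f g : ℂ → Fin 3 → ℂ} (hf : DifferentiableAt ℝ f z)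
    (hg : DifferentiableAt ℝ g z) :
    wzb (fun w => bil (f w) (g w)) z = bil (wzb f z) (g z) + bil (f z) (wzb g z) := by
  have d : ∀ i, DifferentiableAt ℝ (fun w => f w i * g w i) z := fun i =>
    (diffAt_apply hf i).mul (diffAt_apply hg i)
  have h0 : wzb (fun w => bil (f w) (g w)) z =
      wzb (fun w => f w 0 * g w 0 + f w 1 * g w 1 + f w 2 * g w 2) z := by
    apply wzb_congr
    filter_upwards with w
    simp [bil, Fin.sum_univ_three]
  rw [h0, wzb_add (f := fun w => f w 0 * g w 0 + f w 1 * g w 1) ((d 0).add (d 1)) (d 2), wzb_add (d 0) (d 1),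
    wzb_mul (diffAt_apply hf 0) (diffAt_apply hg 0),
    wzb_mul (diffAt_apply hf 1) (diffAt_apply hg 1),
    wzb_mul (diffAt_apply hf 2) (diffAt_apply hg 2),
    wzb_apply hf 0, wzb_apply hf 1, wzb_apply hf 2,
    wzb_apply hg 0, wzb_apply hg 1, wzb_apply hg 2]
  simp only [bil, Fin.sum_univ_three]
  ring

/-- If `bil` of `w` with a "basis" triple vanishes, then `w = 0`. -/
lemma bil_eq_zero_forall {pv a b w : Fin 3 → ℂ} {r : ℂ} (hr : r ≠ 0)
    (hpp : bil pv pv = 1) (hpa : bil pv a = 0) (hpb : bil pv b = 0)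
    (haa : bil a a = 0) (hbb : bil b b = 0) (hab : bil a b = r)
    (h1 : bil pv w = 0) (h2 : bil a w = 0) (h3 : bil b w = 0) : w = 0 := by
  classical
  have e_pp : pv 0 * pv 0 + pv 1 * pv 1 + pv 2 * pv 2 = 1 := by
    simpa [bil, Fin.sum_univ_three] using hpp
  have e_pa : pv 0 * a 0 + pv 1 * a 1 + pv 2 * a 2 = 0 := by
    simpa [bil, Fin.sum_univ_three] using hpa
  have e_pb : pv 0 * b 0 + pv 1 * b 1 + pv 2 * b 2 = 0 := by
    simpa [bil, Fin.sum_univ_three] using hpb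
  have e_aa : a 0 * a 0 + a 1 * a 1 + a 2 * a 2 = 0 := by
    simpa [bil, Fin.sum_univ_three] using haa
  have e_bb : b 0 * b 0 + b 1 * b 1 + b 2 * b 2 = 0 := by
    simpa [bil, Fin.sum_univ_three] using hbb
  have e_ab : a 0 * b 0 + a 1 * b 1 + a 2 * b 2 = r := by
    simpa [bil, Fin.sum_univ_three] using hab
  have f1 : pv 0 * w 0 + pv 1 * w 1 + pv 2 * w 2 = 0 := by
    simpa [bil, Fin.sum_univ_three] using h1
  have f2 : a 0 * w 0 + a 1 * w 1 + a 2 * w 2 = 0 := by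
    simpa [bil, Fin.sum_univ_three] using h2
  have f3 : b 0 * w 0 + b 1 * w 1 + b 2 * w 2 = 0 := by
    simpa [bil, Fin.sum_univ_three] using h3
  set M : Matrix (Fin 3) (Fin 3) ℂ := Matrix.of ![pv, a, b] with hM
  have hMMT : M * M.transpose = !![1, 0, 0; 0, 0, r; 0, r, 0] := by
    ext i j
    simp only [Matrix.mul_apply, Matrix.transpose_apply, Fin.sum_univ_three]
    fin_cases i <;> fin_cases j <;> simp [M, Matrix.vecHead, Matrix.vecTail] <;>
      first
      | rfl
      | linear_combination e_pp
      | linear_combination e_pa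
      | linear_combination e_pb
      | linear_combination e_aa
      | linear_combination e_bb
      | linear_combination e_ab
  have hd2 : M.det * M.det = -(r * r) := by
    have h := congrArg Matrix.det hMMT
    rw [Matrix.det_mul, Matrix.det_transpose] at h
    rw [h, Matrix.det_fin_three]
    norm_num
    rfl
  have hdet : M.det ≠ 0 := by
    intro h
    rw [h, mul_zero] at hd2
    exact hr (by
      have : r * r = 0 := by linear_combination hd2
      exact (mul_self_eq_zero).mp this)
  have hmv : M.mulVec w = 0 := by
    ext i
    simp only [Matrix.mulVec, dotProduct, Fin.sum_univ_three]
    fin_cases i <;> simp [M, Matrix.vecHead, Matrix.vecTail] <;>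
      first
      | rfl
      | linear_combination f1
      | linear_combination f2
      | linear_combination f3
  exact Matrix.eq_zero_of_mulVec_eq_zero hdet hmv

lemma bil_right_comb (v x y : Fin 3 → ℂ) (c : ℂ) :
    bil v (x - c • y) = bil v x - c * bil v y := by
  simp only [bil, Fin.sum_univ_three, Pi.sub_apply, Pi.smul_apply, smul_eq_mul]
  ring

lemma bil_neg (v w : Fin 3 → ℂ) : bil (-v) w = -bil v w := by
  simp only [bil, Fin.sum_univ_three, Pi.neg_apply, neg_mul]
  ring

end Toolkit

set_option maxHeartbeats 2000000 in
theorem stmt3 (U : Set ℂ) (hU : IsOpen U) (φ : ℂ → Fin 3 → ℂ)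
    (hsmooth : ContDiffOn ℝ (⊤ : ℕ∞) φ U)
    (hreal : ∀ z ∈ U, ∀ i, (φ z i).im = 0)
    (hnorm : ∀ z ∈ U, bil (φ z) (φ z) = 1)
    (hconf : ∀ z ∈ U, bil (wz φ z) (wz φ z) = 0)
    (hharm : ∀ z ∈ U, wz (wzb φ) z = -(nsq φ z) • φ z)
    (hpos : ∀ z ∈ U, wz φ z ≠ 0)
    (u : ℂ → ℂ)
    (husmooth : ContDiffOn ℝ (⊤ : ℕ∞) u U)
    (hureal : ∀ z ∈ U, (u z).im = 0)
    (hueig : ∀ z ∈ U, wz (wzb u) z = -(nsq φ z) * u z)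
    (X : ℂ → Fin 3 → ℂ)
    (hX : ∀ z ∈ U, X z =
      u z • φ z + (nsq φ z)⁻¹ • (wz u z • wzb φ z + wzb u z • wz φ z)) :
    ∀ z ∈ U, bil (wz X z) (wz X z) = 0 ∧ wzb (wz X) z = 0 := by
  -- differentiability / smoothness of the basic players
  have hφd : ∀ w ∈ U, DifferentiableAt ℝ φ w := fun w hw => diffAt_of_cd hU hw hsmooth
  have hud : ∀ w ∈ U, DifferentiableAt ℝ u w := fun w hw => diffAt_of_cd hU hw husmooth
  have ha_cd : ContDiffOn ℝ (⊤ : ℕ∞) (wz φ) U := contDiffOn_wz hU hsmooth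
  have hb_cd : ContDiffOn ℝ (⊤ : ℕ∞) (wzb φ) U := contDiffOn_wzb hU hsmooth
  have hp_cd : ContDiffOn ℝ (⊤ : ℕ∞) (wz u) U := contDiffOn_wz hU husmooth
  have hq_cd : ContDiffOn ℝ (⊤ : ℕ∞) (wzb u) U := contDiffOn_wzb hU husmooth
  have had : ∀ w ∈ U, DifferentiableAt ℝ (wz φ) w := fun w hw => diffAt_of_cd hU hw ha_cd
  have hbd : ∀ w ∈ U, DifferentiableAt ℝ (wzb φ) w := fun w hw => diffAt_of_cd hU hw hb_cd
  have hpd : ∀ w ∈ U, DifferentiableAt ℝ (wz u) w := fun w hw => diffAt_of_cd hU hw hp_cd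
  have hqd : ∀ w ∈ U, DifferentiableAt ℝ (wzb u) w := fun w hw => diffAt_of_cd hU hw hq_cd
  -- conjugation relations
  have hbconj : ∀ w ∈ U, wzb φ w = fun i => starRingEnd ℂ (wz φ w i) := by
    intro w hw
    funext i
    calc wzb φ w i = wzb (fun t => φ t i) w := (wzb_apply (hφd w hw) i).symm
      _ = starRingEnd ℂ (wz (fun t => φ t i) w) :=
        wzb_eq_conj_wz hU hw (diffAt_apply (hφd w hw) i) (fun t ht => hreal t ht i)
      _ = starRingEnd ℂ (wz φ w i) := by rw [wz_apply (hφd w hw) i]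
  have hφconj : ∀ w ∈ U, φ w = fun i => starRingEnd ℂ (φ w i) := by
    intro w hw
    funext i
    exact (Complex.conj_eq_iff_im.mpr (hreal w hw i)).symm
  -- `nsq` as a bilinear pairing, and nonvanishing
  have hr_bil : ∀ w ∈ U, nsq φ w = bil (wz φ w) (wzb φ w) := by
    intro w hw
    rw [hbconj w hw]
    simp [nsq, herm, bil]
  have hrne : ∀ w ∈ U, nsq φ w ≠ 0 := by
    intro w hw h0
    have e : nsq φ w = ((Complex.normSq (wz φ w 0) + Complex.normSq (wz φ w 1) +
        Complex.normSq (wz φ w 2) : ℝ) : ℂ) := by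
      simp [nsq, herm, Fin.sum_univ_three, Complex.mul_conj]
    rw [e] at h0
    rw [Complex.ofReal_eq_zero] at h0
    have n0 := Complex.normSq_nonneg (wz φ w 0)
    have n1 := Complex.normSq_nonneg (wz φ w 1)
    have n2 := Complex.normSq_nonneg (wz φ w 2)
    have h00 : wz φ w 0 = 0 := Complex.normSq_eq_zero.mp (by linarith)
    have h01 : wz φ w 1 = 0 := Complex.normSq_eq_zero.mp (by linarith)
    have h02 : wz φ w 2 = 0 := Complex.normSq_eq_zero.mp (by linarith)
    refine hpos w hw (funext fun i => ?_)
    fin_cases i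
    · exact h00
    · exact h01
    · exact h02
  -- Gram relations
  have g_pa : ∀ w ∈ U, bil (φ w) (wz φ w) = 0 := by
    intro w hw
    have hcongr : (fun t => bil (φ t) (φ t)) =ᶠ[nhds w] fun _ => (1 : ℂ) := by
      filter_upwards [hU.mem_nhds hw] with t ht using hnorm t ht
    have h1 : wz (fun t => bil (φ t) (φ t)) w = 0 := by
      rw [wz_congr hcongr]; exact wz_const 1
    have h2 := wz_bil (hφd w hw) (hφd w hw)
    rw [h1] at h2
    have h3 : bil (wz φ w) (φ w) + bil (φ w) (wz φ w) = 0 := h2.symm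
    rw [bil_comm (wz φ w) (φ w)] at h3
    exact add_self_eq_zero.mp h3
  have g_pb : ∀ w ∈ U, bil (φ w) (wzb φ w) = 0 := by
    intro w hw
    rw [hbconj w hw]
    nth_rewrite 1 [hφconj w hw]
    rw [bil_conj, g_pa w hw, map_zero]
  have g_bb : ∀ w ∈ U, bil (wzb φ w) (wzb φ w) = 0 := by
    intro w hw
    rw [hbconj w hw, bil_conj, hconf w hw, map_zero]
  have g_ab : ∀ w ∈ U, bil (wz φ w) (wzb φ w) = nsq φ w := fun w hw => (hr_bil w hw).symm
  -- Schwarz consequences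
  have s_a : ∀ w ∈ U, wzb (wz φ) w = -(nsq φ w) • φ w := by
    intro w hw
    rw [← wz_wzb_comm hU hw hsmooth]
    exact hharm w hw
  have s_p : ∀ w ∈ U, wzb (wz u) w = -(nsq φ w) * u w := by
    intro w hw
    rw [← wz_wzb_comm hU hw husmooth]
    exact hueig w hw
  -- derivatives of nsq
  have hA : ∀ w ∈ U, wz (nsq φ) w = bil (wz (wz φ) w) (wzb φ w) := by
    intro w hw
    have hcongr : nsq φ =ᶠ[nhds w] fun t => bil (wz φ t) (wzb φ t) := by
      filter_upwards [hU.mem_nhds hw] with t ht using hr_bil t ht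
    rw [wz_congr hcongr, wz_bil (had w hw) (hbd w hw), hharm w hw,
      bil_smul_right, bil_comm (wz φ w) (φ w), g_pa w hw, mul_zero, add_zero]
  have hB : ∀ w ∈ U, wzb (nsq φ) w = bil (wz φ w) (wzb (wzb φ) w) := by
    intro w hw
    have hcongr : nsq φ =ᶠ[nhds w] fun t => bil (wz φ t) (wzb φ t) := by
      filter_upwards [hU.mem_nhds hw] with t ht using hr_bil t ht
    rw [wzb_congr hcongr, wzb_bil (had w hw) (hbd w hw), s_a w hw,
      bil_smul, g_pb w hw, mul_zero, zero_add]
  -- second-derivative Gram relations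
  have hwza_cd : ContDiffOn ℝ (⊤ : ℕ∞) (wz (wz φ)) U := contDiffOn_wz hU ha_cd
  have hwza_d : ∀ w ∈ U, DifferentiableAt ℝ (wz (wz φ)) w := fun w hw =>
    diffAt_of_cd hU hw hwza_cd
  have hwbb_cd : ContDiffOn ℝ (⊤ : ℕ∞) (wzb (wzb φ)) U := contDiffOn_wzb hU hb_cd
  have hwbb_d : ∀ w ∈ U, DifferentiableAt ℝ (wzb (wzb φ)) w := fun w hw =>
    diffAt_of_cd hU hw hwbb_cd
  have hC : ∀ w ∈ U, bil (wz (wz φ) w) (φ w) = 0 := by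
    intro w hw
    have hcongr : (fun t => bil (wz φ t) (φ t)) =ᶠ[nhds w] fun _ => (0 : ℂ) := by
      filter_upwards [hU.mem_nhds hw] with t ht
      rw [bil_comm]; exact g_pa t ht
    have h1 : wz (fun t => bil (wz φ t) (φ t)) w = 0 := by
      rw [wz_congr hcongr]; exact wz_const 0
    have h2 := wz_bil (had w hw) (hφd w hw)
    rw [h1, hconf w hw, add_zero] at h2
    exact h2.symm
  have hD : ∀ w ∈ U, bil (wz (wz φ) w) (wz φ w) = 0 := by
    intro w hw
    have hcongr : (fun t => bil (wz φ t) (wz φ t)) =ᶠ[nhds w] fun _ => (0 : ℂ) := by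
      filter_upwards [hU.mem_nhds hw] with t ht using hconf t ht
    have h1 : wz (fun t => bil (wz φ t) (wz φ t)) w = 0 := by
      rw [wz_congr hcongr]; exact wz_const 0
    have h2 := wz_bil (had w hw) (had w hw)
    rw [h1] at h2
    have h3 : bil (wz (wz φ) w) (wz φ w) + bil (wz φ w) (wz (wz φ) w) = 0 := h2.symm
    rw [bil_comm (wz φ w) (wz (wz φ) w)] at h3
    exact add_self_eq_zero.mp h3
  have hE : ∀ w ∈ U, wz (wz φ) w = ((nsq φ w)⁻¹ * wz (nsq φ) w) • wz φ w := by
    intro w hw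
    have h0 : wz (wz φ) w - ((nsq φ w)⁻¹ * wz (nsq φ) w) • wz φ w = 0 := by
      apply bil_eq_zero_forall (hrne w hw) (hnorm w hw) (g_pa w hw) (g_pb w hw)
        (hconf w hw) (g_bb w hw) (g_ab w hw)
      · rw [bil_right_comb, bil_comm (φ w) (wz (wz φ) w), hC w hw, g_pa w hw,
          mul_zero, sub_zero]
      · rw [bil_right_comb, bil_comm (wz φ w) (wz (wz φ) w), hD w hw, hconf w hw,
          mul_zero, sub_zero]
      · rw [bil_right_comb, bil_comm (wzb φ w) (wz (wz φ) w), ← hA w hw,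
          bil_comm (wzb φ w) (wz φ w), g_ab w hw]
        field_simp [hrne w hw]
        ring
    exact sub_eq_zero.mp h0
  have hFb : ∀ w ∈ U, bil (φ w) (wzb (wzb φ) w) = 0 := by
    intro w hw
    have hcongr : (fun t => bil (φ t) (wzb φ t)) =ᶠ[nhds w] fun _ => (0 : ℂ) := by
      filter_upwards [hU.mem_nhds hw] with t ht using g_pb t ht
    have h1 : wzb (fun t => bil (φ t) (wzb φ t)) w = 0 := by
      rw [wzb_congr hcongr]; exact wzb_const 0
    have h2 := wzb_bil (hφd w hw) (hbd w hw)
    rw [h1, g_bb w hw, zero_add] at h2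
    exact h2.symm
  have hG : ∀ w ∈ U, bil (wzb φ w) (wzb (wzb φ) w) = 0 := by
    intro w hw
    have hcongr : (fun t => bil (wzb φ t) (wzb φ t)) =ᶠ[nhds w] fun _ => (0 : ℂ) := by
      filter_upwards [hU.mem_nhds hw] with t ht using g_bb t ht
    have h1 : wzb (fun t => bil (wzb φ t) (wzb φ t)) w = 0 := by
      rw [wzb_congr hcongr]; exact wzb_const 0
    have h2 := wzb_bil (hbd w hw) (hbd w hw)
    rw [h1] at h2
    have h3 : bil (wzb (wzb φ) w) (wzb φ w) + bil (wzb φ w) (wzb (wzb φ) w) = 0 := h2.symm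
    rw [bil_comm (wzb (wzb φ) w) (wzb φ w)] at h3
    exact add_self_eq_zero.mp h3
  have hHH : ∀ w ∈ U, wzb (wzb φ) w = ((nsq φ w)⁻¹ * wzb (nsq φ) w) • wzb φ w := by
    intro w hw
    have h0 : wzb (wzb φ) w - ((nsq φ w)⁻¹ * wzb (nsq φ) w) • wzb φ w = 0 := by
      apply bil_eq_zero_forall (hrne w hw) (hnorm w hw) (g_pa w hw) (g_pb w hw)
        (hconf w hw) (g_bb w hw) (g_ab w hw)
      · rw [bil_right_comb, hFb w hw, g_pb w hw, mul_zero, sub_zero]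
      · rw [bil_right_comb, ← hB w hw, g_ab w hw]
        field_simp [hrne w hw]
        ring
      · rw [bil_right_comb, hG w hw, g_bb w hw, mul_zero, sub_zero]
    exact sub_eq_zero.mp h0
  -- smoothness of nsq
  have hr_cd : ContDiffOn ℝ (⊤ : ℕ∞) (nsq φ) U := by
    have hcomp : ∀ i : Fin 3, ContDiffOn ℝ (⊤ : ℕ∞) (fun t => wz φ t i) U := fun i =>
      (((ContinuousLinearMap.proj (R := ℂ) (φ := fun _ : Fin 3 => ℂ)
        i).restrictScalars ℝ).contDiff).comp_contDiffOn ha_cd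
    have hconj : ∀ i : Fin 3, ContDiffOn ℝ (⊤ : ℕ∞) (fun t => starRingEnd ℂ (wz φ t i)) U := by
      intro i
      have := (((Complex.conjCLE : ℂ ≃L[ℝ] ℂ) :
        ℂ →L[ℝ] ℂ).contDiff).comp_contDiffOn (hcomp i)
      exact this.congr (fun t ht => by simp)
    have h0 : ContDiffOn ℝ (⊤ : ℕ∞) (fun t => (wz φ t 0 * starRingEnd ℂ (wz φ t 0) +
        wz φ t 1 * starRingEnd ℂ (wz φ t 1)) + wz φ t 2 * starRingEnd ℂ (wz φ t 2)) U :=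
      (((hcomp 0).mul (hconj 0)).add ((hcomp 1).mul (hconj 1))).add ((hcomp 2).mul (hconj 2))
    exact h0.congr (fun t ht => by simp [nsq, herm, Fin.sum_univ_three])
  have hrd : ∀ w ∈ U, DifferentiableAt ℝ (nsq φ) w := fun w hw => diffAt_of_cd hU hw hr_cd
  have hwzr_cd : ContDiffOn ℝ (⊤ : ℕ∞) (wz (nsq φ)) U := contDiffOn_wz hU hr_cd
  have hwzrd : ∀ w ∈ U, DifferentiableAt ℝ (wz (nsq φ)) w := fun w hw =>
    diffAt_of_cd hU hw hwzr_cd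
  have hwzpd : ∀ w ∈ U, DifferentiableAt ℝ (wz (wz u)) w := fun w hw =>
    diffAt_of_cd hU hw (contDiffOn_wz hU hp_cd)
  -- the key first-derivative computation: X_z = F φ_z̄
  have hI : ∀ w ∈ U, wz X w =
      ((nsq φ w)⁻¹ * wz (wz u) w -
        (nsq φ w * nsq φ w)⁻¹ * (wz u w * wz (nsq φ) w)) • wzb φ w := by
    intro w hw
    have hinvd : DifferentiableAt ℝ (fun t => (nsq φ t)⁻¹) w :=
      diffAt_inv (hrd w hw) (hrne w hw)
    have hGd : DifferentiableAt ℝ (fun t => wz u t • wzb φ t + wzb u t • wz φ t) w :=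
      ((hpd w hw).smul (hbd w hw)).add ((hqd w hw).smul (had w hw))
    have hXe : X =ᶠ[nhds w] fun t =>
        u t • φ t + (nsq φ t)⁻¹ • (wz u t • wzb φ t + wzb u t • wz φ t) := by
      filter_upwards [hU.mem_nhds hw] with t ht using hX t ht
    rw [wz_congr hXe, wz_add (f := fun t => u t • φ t)
        (g := fun t => (nsq φ t)⁻¹ • (wz u t • wzb φ t + wzb u t • wz φ t))
        ((hud w hw).smul (hφd w hw)) (hinvd.smul hGd),
      wz_smul (hud w hw) (hφd w hw), wz_smul hinvd hGd,
      wz_add (f := fun t => wz u t • wzb φ t) (g := fun t => wzb u t • wz φ t)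
        ((hpd w hw).smul (hbd w hw)) ((hqd w hw).smul (had w hw)),
      wz_smul (hpd w hw) (hbd w hw), wz_smul (hqd w hw) (had w hw),
      wz_inv (hrd w hw) (hrne w hw),
      hharm w hw, hueig w hw, hE w hw]
    match_scalars <;> field_simp [hrne w hw] <;> ring
  -- conclusion
  intro z hz
  constructor
  · rw [hI z hz, bil_smul, bil_smul_right, g_bb z hz]
    ring
  · -- harmonicity
    have hinv : DifferentiableAt ℝ (fun t => (nsq φ t)⁻¹) z :=
      diffAt_inv (hrd z hz) (hrne z hz)
    have hinv2 : DifferentiableAt ℝ (fun t => (nsq φ t * nsq φ t)⁻¹) z :=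
      diffAt_inv ((hrd z hz).mul (hrd z hz)) (mul_ne_zero (hrne z hz) (hrne z hz))
    have d1 : DifferentiableAt ℝ (fun t => (nsq φ t)⁻¹ * wz (wz u) t) z :=
      hinv.mul (hwzpd z hz)
    have d2 : DifferentiableAt ℝ
        (fun t => (nsq φ t * nsq φ t)⁻¹ * (wz u t * wz (nsq φ) t)) z :=
      hinv2.mul ((hpd z hz).mul (hwzrd z hz))
    have hFd : DifferentiableAt ℝ (fun t => (nsq φ t)⁻¹ * wz (wz u) t -
        (nsq φ t * nsq φ t)⁻¹ * (wz u t * wz (nsq φ) t)) z := d1.sub d2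
    have hwzXe : wz X =ᶠ[nhds z] fun t =>
        ((nsq φ t)⁻¹ * wz (wz u) t -
          (nsq φ t * nsq φ t)⁻¹ * (wz u t * wz (nsq φ) t)) • wzb φ t := by
      filter_upwards [hU.mem_nhds hz] with t ht using hI t ht
    -- third-order mixed derivative of u
    have hq3 : wzb (wz (wz u)) z = -(wz (nsq φ) z * u z + nsq φ z * wz u z) := by
      have e1 : wzb (wz (wz u)) z = wz (wzb (wz u)) z := (wz_wzb_comm hU hz hp_cd).symm
      have e2 : wzb (wz u) =ᶠ[nhds z] fun t => -(nsq φ t * u t) := by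
        filter_upwards [hU.mem_nhds hz] with t ht using (s_p t ht).trans (by ring)
      rw [e1, wz_congr e2, wz_neg (f := fun t => nsq φ t * u t) ((hrd z hz).mul (hud z hz)),
        wz_mul (hrd z hz) (hud z hz)]
    -- mixed second derivative of nsq (the "curvature" identity)
    have hv0 : wzb (wz (wz φ)) z = -(wz (nsq φ) z • φ z + nsq φ z • wz φ z) := by
      have e3 : wzb (wz (wz φ)) z = wz (wzb (wz φ)) z := (wz_wzb_comm hU hz ha_cd).symm
      have e4 : wzb (wz φ) =ᶠ[nhds z] fun t => -(nsq φ t • φ t) := by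
        filter_upwards [hU.mem_nhds hz] with t ht using (s_a t ht).trans (by rw [neg_smul])
      rw [e3, wz_congr e4, wz_neg (f := fun t => nsq φ t • φ t) ((hrd z hz).smul (hφd z hz)),
        wz_smul (hrd z hz) (hφd z hz)]
    have hq5 : wzb (wz (nsq φ)) z = -(nsq φ z * nsq φ z) +
        (nsq φ z)⁻¹ * wz (nsq φ) z * ((nsq φ z)⁻¹ * wzb (nsq φ) z) * nsq φ z := by
      have e2 : wz (nsq φ) =ᶠ[nhds z] fun t => bil (wz (wz φ) t) (wzb φ t) := by
        filter_upwards [hU.mem_nhds hz] with t ht using hA t ht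
      have hv1 : bil (wzb (wz (wz φ)) z) (wzb φ z) = -(nsq φ z * nsq φ z) := by
        rw [hv0, bil_neg, bil_add, bil_smul, bil_smul, g_pb z hz, g_ab z hz]
        ring
      have hv2 : bil (wz (wz φ) z) (wzb (wzb φ) z) =
          (nsq φ z)⁻¹ * wz (nsq φ) z * ((nsq φ z)⁻¹ * wzb (nsq φ) z) * nsq φ z := by
        rw [hE z hz, hHH z hz, bil_smul, bil_smul_right, g_ab z hz]
        ring
      rw [wzb_congr e2, wzb_bil (hwza_d z hz) (hbd z hz), hv1, hv2]
    rw [wzb_congr hwzXe, wzb_smul hFd (hbd z hz), hHH z hz,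
      wzb_sub d1 d2,
      wzb_mul hinv (hwzpd z hz),
      wzb_mul (g := fun t => wz u t * wz (nsq φ) t) hinv2 ((hpd z hz).mul (hwzrd z hz)),
      wzb_mul (hpd z hz) (hwzrd z hz),
      wzb_inv (hrd z hz) (hrne z hz),
      wzb_inv (f := fun t => nsq φ t * nsq φ t) ((hrd z hz).mul (hrd z hz)) (mul_ne_zero (hrne z hz) (hrne z hz)),
      wzb_mul (hrd z hz) (hrd z hz),
      hq3, hq5, s_p z hz]
    have hne : nsq φ z ≠ 0 := hrne z hz
    have hc : nsq φ z * (nsq φ z)⁻¹ = 1 := mul_inv_cancel₀ hne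
    match_scalars
    field_simp
    ring
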